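/- arXiv:1909.09569 — 2 statements merged into one kernel-verified Lean document; each statement's English description precedes it below -/
import Mathlib

section
/- Convergence of randomized stochastic gradient descent for smooth non-convex objectives (Theorem 1): Let f : ℝ^p → ℝ be differentiable with L-Lipschitz gradient and bounded below by f* (i.e., f(w) ≥ f* for all w). Let w_0 ∈ ℝ^p, let N ≥ 1, and let step sizes γ_1,…,γ_N satisfy 0 < γ_k ≤ 1/L. Suppose the iterates are generated by w_{k+1} = w_k − γ_k G_k, where each stochastic gradient G_k satisfies E[G_k | w_k] = ∇f(w_k) and E[‖G_k − ∇f(w_k)‖² | w_k] ≤ σ². Let H = Σ_{k=1}^N γ_k and let R ∈ {1,…,N} be chosen independently of the G_k's with P(R = k) = γ_k/H. Then E[‖∇f(w_R)‖²] ≤ 2(f(w_0) − f*)/H + (L σ²/H) Σ_{k=1}^N γ_k². -/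
/-!
The descent lemma `f y ≤ f x + ⟪∇f x, y - x⟫ + L/2 ‖y - x‖²`, applied to the step
`w (k+1) = w k - γ k • G k`, bounds `f (w (k+1))` by terms in `⟪∇f (w k), G k⟫`, `‖∇f (w k)‖²`
and `‖G k - ∇f (w k)‖²`. Since `∇f (w k)` is measurable for the past of the noise, the pull-out
property and unbiasedness give `E⟪∇f (w k), G k⟫ = E‖∇f (w k)‖²`, and the variance bound gives
`E‖G k - ∇f (w k)‖² ≤ σ²`; for `γ k ≤ 1/L` this yields
`γ k E‖∇f (w k)‖² ≤ 2 (E f (w k) - E f (w (k+1))) + L σ² γ k²`. Summing telescopes, and because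
`R` is independent of the `G`'s, hence of every iterate,
`E‖∇f (w R)‖² = ∑ k, (γ k / H) E‖∇f (w k)‖²`.

All expectations are finite because the iterates stay in `L²`: `∇f` is Lipschitz, so
`∇f (w k) ∈ L²`, hence `G k ∈ L²`, hence `w (k+1) ∈ L²`; and `f` grows at most quadratically.
-/

open MeasureTheory ProbabilityTheory

section Smooth

variable {E : Type*} [NormedAddCommGroup E] [InnerProductSpace ℝ E] [CompleteSpace E]
  {f : E → ℝ} {L : ℝ}

theorem abs_sub_sub_inner_gradient_le (hdiff : Differentiable ℝ f)
    (hLip : ∀ u v, ‖gradient f u - gradient f v‖ ≤ L * ‖u - v‖) (x y : E) :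
    |f y - f x - inner ℝ (gradient f x) (y - x)| ≤ L / 2 * ‖y - x‖ ^ 2 := by
  set v := y - x
  have hderiv (t : ℝ) :
      HasDerivAt (fun s : ℝ => f (x + s • v) - f x - s * inner ℝ (gradient f x) v)
        (inner ℝ (gradient f (x + t • v)) v - inner ℝ (gradient f x) v) t := by
    have hline : HasDerivAt (fun s : ℝ => x + s • v) v t := by
      simpa using ((hasDerivAt_id t).smul_const v).const_add x
    have hcomp :
        HasDerivAt (fun s : ℝ => f (x + s • v)) (inner ℝ (gradient f (x + t • v)) v) t := by
      simpa [Function.comp_def] using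
        (hdiff _).hasGradientAt.hasFDerivAt.comp_hasDerivAt t hline
    exact (hcomp.sub_const (f x)).sub (hasDerivAt_mul_const _)
  have hbound : ∀ t ∈ Set.Ico (0 : ℝ) 1,
      ‖inner ℝ (gradient f (x + t • v)) v - inner ℝ (gradient f x) v‖ ≤ L * t * ‖v‖ ^ 2 := by
    intro t ht
    calc ‖inner ℝ (gradient f (x + t • v)) v - inner ℝ (gradient f x) v‖
        = |inner ℝ (gradient f (x + t • v) - gradient f x) v| := by rw [inner_sub_left]; rfl
      _ ≤ ‖gradient f (x + t • v) - gradient f x‖ * ‖v‖ := abs_real_inner_le_norm _ _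
      _ ≤ L * ‖t • v‖ * ‖v‖ := by gcongr; simpa using hLip (x + t • v) x
      _ = L * t * ‖v‖ ^ 2 := by rw [norm_smul, Real.norm_of_nonneg ht.1]; ring
  have hB (t : ℝ) : HasDerivAt (fun s : ℝ => L / 2 * ‖v‖ ^ 2 * s ^ 2) (L * t * ‖v‖ ^ 2) t :=
    ((hasDerivAt_pow 2 t).const_mul _).congr_deriv (by push_cast; ring)
  have := image_norm_le_of_norm_deriv_right_le_deriv_boundary
    (fun t _ => (hderiv t).continuousAt.continuousWithinAt)
    (fun t _ => (hderiv t).hasDerivWithinAt) (by simp) hB hbound (b := 1)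
    (Set.right_mem_Icc.2 zero_le_one)
  simpa [v] using this

theorem mul_sq_norm_gradient_le_of_step (hdiff : Differentiable ℝ f)
    (hLip : ∀ u v, ‖gradient f u - gradient f v‖ ≤ L * ‖u - v‖) {γ : ℝ} (hγ : 0 ≤ γ)
    (hLγ : L * γ ≤ 1) (x v : E) :
    γ * ‖gradient f x‖ ^ 2 ≤ 2 * (f x - f (x - γ • v))
      + 2 * (L * γ ^ 2 - γ) * (inner ℝ (gradient f x) v - ‖gradient f x‖ ^ 2)
      + L * γ ^ 2 * ‖v - gradient f x‖ ^ 2 := by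
  have hdescent :=
    (le_abs_self _).trans (abs_sub_sub_inner_gradient_le hdiff hLip x (x - γ • v))
  rw [sub_sub_cancel_left, inner_neg_right, real_inner_smul_right, norm_neg, norm_smul,
    Real.norm_of_nonneg hγ] at hdescent
  rw [norm_sub_sq_real, real_inner_comm (gradient f x) v]
  nlinarith [mul_nonneg (mul_nonneg hγ (sub_nonneg.2 hLγ)) (sq_nonneg ‖gradient f x‖)]

theorem lipschitzWith_gradient (hLip : ∀ u v, ‖gradient f u - gradient f v‖ ≤ L * ‖u - v‖) :
    LipschitzWith (Real.toNNReal L) (gradient f) :=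
  .of_dist_le' fun u v => by simpa only [dist_eq_norm] using hLip u v

end Smooth

section Lp

variable {Ω : Type*} {m0 : MeasurableSpace Ω} {μ : Measure Ω}

theorem LipschitzWith.comp_memLp_of_isFiniteMeasure [IsFiniteMeasure μ] {E F : Type*}
    [NormedAddCommGroup E] [NormedAddCommGroup F] {K : NNReal} {g : E → F} {X : Ω → E}
    {p : ENNReal} (hg : LipschitzWith K g) (hX : MemLp X p μ) : MemLp (g ∘ X) p μ := by
  have hg0 : LipschitzWith K (fun x => g x - g 0) := by
    simpa using hg.sub (LipschitzWith.const (g 0))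
  have hsplit : g ∘ X = (fun x => g x - g 0) ∘ X + fun _ => g 0 := by ext; simp
  rw [hsplit]
  exact (hg0.comp_memLp (by simp) hX).add (memLp_const (g 0))

theorem MeasureTheory.MemLp.of_integrable_sq_norm_sub {E : Type*} [NormedAddCommGroup E]
    {X Y : Ω → E} (hY : MemLp Y 2 μ) (hX : AEStronglyMeasurable X μ)
    (hXY : Integrable (fun ω => ‖X ω - Y ω‖ ^ 2) μ) : MemLp X 2 μ := by
  simpa using ((memLp_two_iff_integrable_sq_norm (hX.sub hY.1)).2 hXY).add hY

variable {E : Type*} [NormedAddCommGroup E] [InnerProductSpace ℝ E]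

theorem MeasureTheory.MemLp.integrable_inner {X Y : Ω → E} (hX : MemLp X 2 μ)
    (hY : MemLp Y 2 μ) : Integrable (fun ω => inner ℝ (X ω) (Y ω)) μ :=
  memLp_one_iff_integrable.1 ((innerSL ℝ).memLp_of_bilin 1 hX hY)

variable [CompleteSpace E] {f : E → ℝ} {L : ℝ}

theorem MeasureTheory.MemLp.gradient_comp [IsFiniteMeasure μ]
    (hLip : ∀ u v, ‖gradient f u - gradient f v‖ ≤ L * ‖u - v‖) {X : Ω → E}
    (hX : MemLp X 2 μ) : MemLp (fun ω => gradient f (X ω)) 2 μ :=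
  (lipschitzWith_gradient hLip).comp_memLp_of_isFiniteMeasure hX

theorem MeasureTheory.MemLp.integrable_comp_of_lipschitz_gradient [IsFiniteMeasure μ]
    (hdiff : Differentiable ℝ f) (hLip : ∀ u v, ‖gradient f u - gradient f v‖ ≤ L * ‖u - v‖)
    {X : Ω → E} (hX : MemLp X 2 μ) : Integrable (fun ω => f (X ω)) μ := by
  have hlin : Integrable (fun ω => f 0 + inner ℝ (gradient f 0) (X ω)) μ :=
    (integrable_const _).add
      ((innerSL ℝ (gradient f 0)).integrable_comp (hX.integrable one_le_two))
  have hrem : Integrable (fun ω => f (X ω) - (f 0 + inner ℝ (gradient f 0) (X ω))) μ := by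
    refine ((hX.integrable_norm_rpow two_ne_zero ENNReal.ofNat_ne_top).const_mul (L / 2)).mono'
      ((hdiff.continuous.comp_aestronglyMeasurable hX.1).sub hlin.1) (ae_of_all _ fun ω => ?_)
    simpa [sub_sub] using abs_sub_sub_inner_gradient_le hdiff hLip 0 (X ω)
  exact (hrem.add hlin).congr (ae_of_all _ fun ω => sub_add_cancel _ _)

theorem memLp_of_eq_sub_smul [IsFiniteMeasure μ]
    (hLip : ∀ u v, ‖gradient f u - gradient f v‖ ≤ L * ‖u - v‖) {N : ℕ} {γ : ℕ → ℝ}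
    {w G : ℕ → Ω → E} (hG : ∀ k, AEStronglyMeasurable (G k) μ) (hw1 : MemLp (w 1) 2 μ)
    (hupdate : ∀ k ∈ Finset.Icc 1 N, ∀ ω, w (k + 1) ω = w k ω - γ k • G k ω)
    (hvarint : ∀ k ∈ Finset.Icc 1 N,
      Integrable (fun ω => ‖G k ω - gradient f (w k ω)‖ ^ 2) μ) :
    ∀ k ∈ Finset.Icc 1 (N + 1), MemLp (w k) 2 μ := by
  intro k hk
  obtain ⟨hk1, hkN⟩ := Finset.mem_Icc.1 hk
  induction k, hk1 using Nat.le_induction with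
  | base => exact hw1
  | succ k hk1 ih =>
    have hk : k ∈ Finset.Icc 1 N := Finset.mem_Icc.2 ⟨hk1, by omega⟩
    have hwk := ih (by grind) (by omega)
    rw [funext (hupdate k hk)]
    exact hwk.sub (((hwk.gradient_comp hLip).of_integrable_sq_norm_sub (hG k)
      (hvarint k hk)).const_smul (γ k))

end Lp

section ConditionalExpectation

variable {Ω : Type*} {m m0 : MeasurableSpace Ω} {μ : Measure Ω}

theorem integral_le_of_condExp_le [IsProbabilityMeasure μ] (hm : m ≤ m0) {X : Ω → ℝ} {c : ℝ}
    (h : μ[X|m] ≤ᵐ[μ] fun _ => c) : ∫ ω, X ω ∂μ ≤ c := by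
  rw [← integral_condExp hm]
  simpa using integral_mono_ae integrable_condExp (integrable_const c) h

variable {E : Type*} [NormedAddCommGroup E] [InnerProductSpace ℝ E] [CompleteSpace E]

theorem integral_inner_eq_integral_sq_norm_of_condExp_eq [IsFiniteMeasure μ] (hm : m ≤ m0)
    {g G : Ω → E} (hgm : StronglyMeasurable[m] g) (hg : MemLp g 2 μ) (hG : MemLp G 2 μ)
    (hmean : μ[G|m] =ᵐ[μ] g) :
    ∫ ω, inner ℝ (g ω) (G ω) ∂μ = ∫ ω, ‖g ω‖ ^ 2 ∂μ := by
  rw [← integral_condExp hm]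
  refine integral_congr_ae ?_
  filter_upwards [condExp_bilin_of_stronglyMeasurable_left (innerSL ℝ) hgm
    (hg.integrable_inner hG) (hG.integrable one_le_two), hmean] with ω hpull hω
  refine hpull.trans ?_
  rw [hω]
  exact real_inner_self_eq_norm_sq (g ω)

variable {f : E → ℝ} {L : ℝ}

theorem mul_integral_sq_norm_gradient_le_of_step [IsProbabilityMeasure μ] (hm : m ≤ m0)
    (hdiff : Differentiable ℝ f) (hLip : ∀ u v, ‖gradient f u - gradient f v‖ ≤ L * ‖u - v‖)
    {γ σ : ℝ} (hγ : 0 < γ) (hγL : γ ≤ 1 / L) {X G : Ω → E} (hXm : StronglyMeasurable[m] X)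
    (hX : MemLp X 2 μ) (hG : MemLp G 2 μ) (hmean : μ[G|m] =ᵐ[μ] fun ω => gradient f (X ω))
    (hvar : μ[fun ω => ‖G ω - gradient f (X ω)‖ ^ 2|m] ≤ᵐ[μ] fun _ => σ ^ 2) :
    γ * ∫ ω, ‖gradient f (X ω)‖ ^ 2 ∂μ
      ≤ 2 * (∫ ω, f (X ω) ∂μ - ∫ ω, f (X ω - γ • G ω) ∂μ) + L * σ ^ 2 * γ ^ 2 := by
  have hL : 0 < L := one_div_pos.1 (hγ.trans_le hγL)
  have hLγ : L * γ ≤ 1 := by rwa [le_div_iff₀ hL, mul_comm] at hγL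
  set g := fun ω => gradient f (X ω)
  have hg : MemLp g 2 μ := hX.gradient_comp hLip
  have hg_sq : Integrable (fun ω => ‖g ω‖ ^ 2) μ := (memLp_two_iff_integrable_sq_norm hg.1).1 hg
  have hgG : Integrable (fun ω => inner ℝ (g ω) (G ω)) μ := hg.integrable_inner hG
  have hf : Integrable (fun ω => f (X ω)) μ := hX.integrable_comp_of_lipschitz_gradient hdiff hLip
  have hf' : Integrable (fun ω => f (X ω - γ • G ω)) μ :=
    (hX.sub (hG.const_smul γ)).integrable_comp_of_lipschitz_gradient hdiff hLip
  have h1 : Integrable (fun ω => 2 * (f (X ω) - f (X ω - γ • G ω))) μ := (hf.sub hf').const_mul 2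
  have h2 : Integrable
      (fun ω => 2 * (L * γ ^ 2 - γ) * (inner ℝ (g ω) (G ω) - ‖g ω‖ ^ 2)) μ :=
    (hgG.sub hg_sq).const_mul _
  have h3 : Integrable (fun ω => L * γ ^ 2 * ‖G ω - g ω‖ ^ 2) μ :=
    ((memLp_two_iff_integrable_sq_norm (hG.1.sub hg.1)).1 (hG.sub hg)).const_mul _
  have h12 : Integrable (fun ω => 2 * (f (X ω) - f (X ω - γ • G ω))
      + 2 * (L * γ ^ 2 - γ) * (inner ℝ (g ω) (G ω) - ‖g ω‖ ^ 2)) μ := h1.add h2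
  have hgm : StronglyMeasurable[m] g :=
    (lipschitzWith_gradient hLip).continuous.comp_stronglyMeasurable hXm
  calc γ * ∫ ω, ‖g ω‖ ^ 2 ∂μ = ∫ ω, γ * ‖g ω‖ ^ 2 ∂μ := (integral_const_mul _ _).symm
    _ ≤ ∫ ω, (2 * (f (X ω) - f (X ω - γ • G ω))
          + 2 * (L * γ ^ 2 - γ) * (inner ℝ (g ω) (G ω) - ‖g ω‖ ^ 2)
          + L * γ ^ 2 * ‖G ω - g ω‖ ^ 2) ∂μ :=
        integral_mono (hg_sq.const_mul γ) (h12.add h3) fun ω =>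
          mul_sq_norm_gradient_le_of_step hdiff hLip hγ.le hLγ (X ω) (G ω)
    _ = 2 * (∫ ω, f (X ω) ∂μ - ∫ ω, f (X ω - γ • G ω) ∂μ)
          + 2 * (L * γ ^ 2 - γ) * (∫ ω, inner ℝ (g ω) (G ω) ∂μ - ∫ ω, ‖g ω‖ ^ 2 ∂μ)
          + L * γ ^ 2 * ∫ ω, ‖G ω - g ω‖ ^ 2 ∂μ := by
        rw [integral_add h12 h3, integral_add h1 h2, integral_const_mul, integral_const_mul,
          integral_const_mul, integral_sub hf hf', integral_sub hgG hg_sq]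
    _ ≤ 2 * (∫ ω, f (X ω) ∂μ - ∫ ω, f (X ω - γ • G ω) ∂μ) + L * σ ^ 2 * γ ^ 2 := by
        rw [integral_inner_eq_integral_sq_norm_of_condExp_eq hm hgm hg hG hmean, sub_self,
          mul_zero, add_zero]
        have hnoise := mul_le_mul_of_nonneg_left (integral_le_of_condExp_le hm hvar)
          (mul_nonneg hL.le (sq_nonneg γ))
        linarith

end ConditionalExpectation

section Iterates

variable {Ω : Type*} {E : Type*} [NormedAddCommGroup E] [NormedSpace ℝ E] [MeasurableSpace E]
  [BorelSpace E] [SecondCountableTopology E]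

theorem stronglyMeasurable_const_sub_sum_smul (G : ℕ → Ω → E) (x : E) (γ : ℕ → ℝ) (s : Finset ℕ) :
    StronglyMeasurable[⨆ j ∈ s, MeasurableSpace.comap (G j) inferInstance]
      (fun ω => x - ∑ j ∈ s, γ j • G j ω) := by
  refine (Measurable.const_sub (Finset.measurable_sum _ fun j hj => ?_) _).stronglyMeasurable
  exact (measurable_iff_comap_le.2
    (le_iSup₂ (f := fun j _ => MeasurableSpace.comap (G j) _) j hj)).const_smul (γ j)

theorem ProbabilityTheory.IndepFun.comp_const_sub_sum_smul {m0 : MeasurableSpace Ω}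
    {μ : Measure Ω} {β F : Type*} [MeasurableSpace β] [MeasurableSpace F] {R : Ω → β}
    {G : ℕ → Ω → E} (h : IndepFun R (fun ω k => G k ω) μ) {φ : E → F} (hφ : Measurable φ)
    (x : E) (γ : ℕ → ℝ) (s : Finset ℕ) :
    IndepFun R (fun ω => φ (x - ∑ j ∈ s, γ j • G j ω)) μ :=
  have hsum : Measurable fun v : ℕ → E => x - ∑ j ∈ s, γ j • v j := by fun_prop
  h.comp measurable_id (hφ.comp hsum)

end Iterates

section RandomIndex

variable {Ω : Type*} {m0 : MeasurableSpace Ω} {μ : Measure Ω}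

theorem integral_comp_index_eq_sum {R : Ω → ℕ} (hR : Measurable R) {s : Finset ℕ}
    (hRs : ∀ ω, R ω ∈ s) {Y : ℕ → Ω → ℝ} (hY : ∀ k ∈ s, Integrable (Y k) μ)
    (hind : ∀ k ∈ s, IndepFun R (Y k) μ) :
    ∫ ω, Y (R ω) ω ∂μ = ∑ k ∈ s, μ.real {ω | R ω = k} * ∫ ω, Y k ω ∂μ := by
  have hRk (k : ℕ) : MeasurableSet {ω | R ω = k} := hR (measurableSet_singleton k)
  have hsplit :
      (fun ω => Y (R ω) ω) = fun ω => ∑ k ∈ s, {ω | R ω = k}.indicator (Y k) ω := by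
    ext ω
    rw [Finset.sum_eq_single_of_mem (R ω) (hRs ω) fun k _ hk => by simp [Ne.symm hk]]
    simp
  rw [hsplit, integral_finsetSum _ fun k hk => (hY k hk).indicator (hRk k)]
  refine Finset.sum_congr rfl fun k hk => ?_
  have hprod (ω : Ω) :
      {ω | R ω = k}.indicator (Y k) ω = ({k} : Set ℕ).indicator 1 (R ω) * Y k ω := by
    by_cases h : R ω = k <;> simp [h]
  have hindicator :
      (fun ω => ({k} : Set ℕ).indicator (1 : ℕ → ℝ) (R ω)) = {ω | R ω = k}.indicator 1 := by
    ext ω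
    by_cases h : R ω = k <;> simp [h]
  have hindk : IndepFun (fun ω => ({k} : Set ℕ).indicator (1 : ℕ → ℝ) (R ω)) (Y k) μ :=
    (hind k hk).comp (φ := ({k} : Set ℕ).indicator 1) measurable_from_top measurable_id
  have hprob : ∫ ω, ({k} : Set ℕ).indicator (1 : ℕ → ℝ) (R ω) ∂μ = μ.real {ω | R ω = k} := by
    rw [hindicator, integral_indicator_one (hRk k)]
  simp_rw [hprod]
  rw [hindk.integral_fun_mul_eq_mul_integral
    (hindicator ▸ (measurable_const.indicator (hRk k)).aestronglyMeasurable) (hY k hk).1, hprob]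

end RandomIndex

section Telescoping

theorem Finset.sum_Icc_sub_succ {M : Type*} [AddCommGroup M] (x : ℕ → M) (n : ℕ) :
    ∑ k ∈ Finset.Icc 1 n, (x k - x (k + 1)) = x 1 - x (n + 1) := by
  induction n with
  | zero => simp
  | succ n ih => rw [Finset.sum_Icc_succ_top (by omega), ih]; abel

theorem eq_sub_sum_of_eq_sub {M : Type*} [AddCommGroup M] {x u : ℕ → M} {N : ℕ}
    (h : ∀ k ∈ Finset.Icc 1 N, x (k + 1) = x k - u k) :
    ∀ k ∈ Finset.Icc 1 (N + 1), x k = x 1 - ∑ j ∈ Finset.Icc 1 (k - 1), u j := by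
  intro k hk
  obtain ⟨n, rfl⟩ : ∃ n, k = n + 1 := ⟨k - 1, by grind⟩
  have htele := Finset.sum_Icc_sub_succ x n
  rw [Finset.sum_congr rfl fun j hj => by rw [h j (by grind), sub_sub_cancel]] at htele
  rw [Nat.add_sub_cancel, htele, sub_sub_cancel]

theorem sum_div_mul_le_of_le_sub {N : ℕ} {γ e F : ℕ → ℝ} {c lo H : ℝ} (hH : 0 ≤ H)
    (hstep : ∀ k ∈ Finset.Icc 1 N, γ k * e k ≤ 2 * (F k - F (k + 1)) + c * γ k ^ 2)
    (hlo : lo ≤ F (N + 1)) :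
    ∑ k ∈ Finset.Icc 1 N, γ k / H * e k
      ≤ 2 * (F 1 - lo) / H + c / H * ∑ k ∈ Finset.Icc 1 N, γ k ^ 2 := by
  have hsum : ∑ k ∈ Finset.Icc 1 N, γ k * e k
      ≤ 2 * (F 1 - lo) + c * ∑ k ∈ Finset.Icc 1 N, γ k ^ 2 := by
    calc _ ≤ ∑ k ∈ Finset.Icc 1 N, (2 * (F k - F (k + 1)) + c * γ k ^ 2) :=
          Finset.sum_le_sum hstep
      _ = 2 * (F 1 - F (N + 1)) + c * ∑ k ∈ Finset.Icc 1 N, γ k ^ 2 := by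
          rw [Finset.sum_add_distrib, ← Finset.mul_sum, ← Finset.mul_sum,
            Finset.sum_Icc_sub_succ]
      _ ≤ _ := by linarith
  calc ∑ k ∈ Finset.Icc 1 N, γ k / H * e k = H⁻¹ * ∑ k ∈ Finset.Icc 1 N, γ k * e k := by
        rw [Finset.mul_sum]
        exact Finset.sum_congr rfl fun _ _ => by ring
    _ ≤ H⁻¹ * (2 * (F 1 - lo) + c * ∑ k ∈ Finset.Icc 1 N, γ k ^ 2) :=
        mul_le_mul_of_nonneg_left hsum (inv_nonneg.2 hH)
    _ = _ := by ring

end Telescoping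

theorem rsg_convergence_general
    {p : ℕ} {Ω : Type*} [MeasurableSpace Ω] (μ : Measure Ω) [IsProbabilityMeasure μ]
    (f : EuclideanSpace ℝ (Fin p) → ℝ) (L σ fstar : ℝ)
    (hdiff : Differentiable ℝ f)
    (hLip : ∀ u v, ‖gradient f u - gradient f v‖ ≤ L * ‖u - v‖)
    (hbdd : ∀ w, fstar ≤ f w)
    (w0 : EuclideanSpace ℝ (Fin p)) (N : ℕ)
    (γ : ℕ → ℝ)
    (hγpos : ∀ k ∈ Finset.Icc 1 N, 0 < γ k)
    (hγle : ∀ k ∈ Finset.Icc 1 N, γ k ≤ 1 / L)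
    (G : ℕ → Ω → EuclideanSpace ℝ (Fin p))
    (hGmeas : ∀ k, Measurable (G k))
    (w : ℕ → Ω → EuclideanSpace ℝ (Fin p))
    (hw1 : ∀ ω, w 1 ω = w0)
    (hupdate : ∀ k ∈ Finset.Icc 1 N, ∀ ω, w (k + 1) ω = w k ω - γ k • G k ω)
    -- unbiasedness: E[G k | w k] = ∇f (w k)
    (hmean : ∀ k ∈ Finset.Icc 1 N,
      μ[G k | ⨆ j ∈ Finset.Icc 1 (k - 1), MeasurableSpace.comap (G j) inferInstance]
        =ᵐ[μ] fun ω => gradient f (w k ω))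
    (hvarint : ∀ k ∈ Finset.Icc 1 N,
      Integrable (fun ω => ‖G k ω - gradient f (w k ω)‖ ^ 2) μ)
    -- bounded conditional variance: E[‖G k - ∇f (w k)‖² | w k] ≤ σ²
    (hvar : ∀ k ∈ Finset.Icc 1 N,
      μ[(fun ω => ‖G k ω - gradient f (w k ω)‖ ^ 2) |
          ⨆ j ∈ Finset.Icc 1 (k - 1), MeasurableSpace.comap (G j) inferInstance]
        ≤ᵐ[μ] fun _ => σ ^ 2)
    (H : ℝ) (hH : H = ∑ k ∈ Finset.Icc 1 N, γ k)
    (R : Ω → ℕ) (hRmeas : Measurable R)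
    (hRrange : ∀ ω, R ω ∈ Finset.Icc 1 N)
    (hRdist : ∀ k ∈ Finset.Icc 1 N, μ {ω | R ω = k} = ENNReal.ofReal (γ k / H))
    (hRindep : IndepFun R (fun ω k => G k ω) μ) :
    ∫ ω, ‖gradient f (w (R ω) ω)‖ ^ 2 ∂μ
      ≤ 2 * (f w0 - fstar) / H + L * σ ^ 2 / H * ∑ k ∈ Finset.Icc 1 N, γ k ^ 2 := by
  have hw : ∀ k ∈ Finset.Icc 1 (N + 1),
      w k = fun ω => w0 - ∑ j ∈ Finset.Icc 1 (k - 1), γ j • G j ω := fun k hk => funext fun ω => by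
    rw [eq_sub_sum_of_eq_sub (x := fun k => w k ω) (fun k hk => hupdate k hk ω) k hk, hw1]
  have hw2 : ∀ k ∈ Finset.Icc 1 (N + 1), MemLp (w k) 2 μ :=
    memLp_of_eq_sub_smul hLip (fun k => (hGmeas k).aestronglyMeasurable)
      (by simpa [funext hw1] using memLp_const w0) hupdate hvarint
  have hstep (k : ℕ) (hk : k ∈ Finset.Icc 1 N) : γ k * ∫ ω, ‖gradient f (w k ω)‖ ^ 2 ∂μ
      ≤ 2 * (∫ ω, f (w k ω) ∂μ - ∫ ω, f (w (k + 1) ω) ∂μ) + L * σ ^ 2 * γ k ^ 2 := by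
    have hk' : k ∈ Finset.Icc 1 (N + 1) := by grind
    simp_rw [hupdate k hk]
    exact mul_integral_sq_norm_gradient_le_of_step (iSup₂_le fun j _ => (hGmeas j).comap_le)
      hdiff hLip (hγpos k hk) (hγle k hk)
      (hw k hk' ▸ stronglyMeasurable_const_sub_sum_smul G w0 γ _) (hw2 k hk')
      (((hw2 k hk').gradient_comp hLip).of_integrable_sq_norm_sub
        (hGmeas k).aestronglyMeasurable (hvarint k hk)) (hmean k hk) (hvar k hk)
  have hlast : fstar ≤ ∫ ω, f (w (N + 1) ω) ∂μ := by
    simpa using integral_mono (integrable_const fstar)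
      ((hw2 (N + 1) (by simp)).integrable_comp_of_lipschitz_gradient hdiff hLip)
      fun ω => hbdd (w (N + 1) ω)
  have hindep (k : ℕ) (hk : k ∈ Finset.Icc 1 N) :
      IndepFun R (fun ω => ‖gradient f (w k ω)‖ ^ 2) μ := by
    rw [hw k (by grind)]
    exact hRindep.comp_const_sub_sum_smul
      ((lipschitzWith_gradient hLip).continuous.measurable.norm.pow_const 2) w0 γ _
  have hH0 : 0 ≤ H := hH ▸ Finset.sum_nonneg fun k hk => (hγpos k hk).le
  rw [integral_comp_index_eq_sum (Y := fun k ω => ‖gradient f (w k ω)‖ ^ 2) hRmeas hRrange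
    (fun k hk => ((hw2 k (by grind)).gradient_comp hLip).integrable_norm_pow two_ne_zero) hindep]
  calc _ = ∑ k ∈ Finset.Icc 1 N, γ k / H * ∫ ω, ‖gradient f (w k ω)‖ ^ 2 ∂μ :=
        Finset.sum_congr rfl fun k hk => by
          rw [measureReal_def, hRdist k hk, ENNReal.toReal_ofReal (div_nonneg (hγpos k hk).le hH0)]
    _ ≤ _ := by simpa [hw1] using sum_div_mul_le_of_le_sub hH0 hstep hlast

theorem rsg_convergence
    {p : ℕ} {Ω : Type*} [MeasurableSpace Ω] (μ : Measure Ω) [IsProbabilityMeasure μ]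
    (f : EuclideanSpace ℝ (Fin p) → ℝ) (L σ fstar : ℝ)
    (hdiff : Differentiable ℝ f)
    (hLip : ∀ u v, ‖gradient f u - gradient f v‖ ≤ L * ‖u - v‖)
    (hbdd : ∀ w, fstar ≤ f w)
    (w0 : EuclideanSpace ℝ (Fin p)) (N : ℕ) (hN : 1 ≤ N)
    (γ : ℕ → ℝ)
    (hγpos : ∀ k ∈ Finset.Icc 1 N, 0 < γ k)
    (hγle : ∀ k ∈ Finset.Icc 1 N, γ k ≤ 1 / L)
    (G : ℕ → Ω → EuclideanSpace ℝ (Fin p))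
    (hGmeas : ∀ k, Measurable (G k))
    (hGint : ∀ k ∈ Finset.Icc 1 N, Integrable (G k) μ)
    (w : ℕ → Ω → EuclideanSpace ℝ (Fin p))
    (hw1 : ∀ ω, w 1 ω = w0)
    (hupdate : ∀ k ∈ Finset.Icc 1 N, ∀ ω, w (k + 1) ω = w k ω - γ k • G k ω)
    -- unbiasedness: E[G k | w k] = ∇f (w k)
    (hmean : ∀ k ∈ Finset.Icc 1 N,
      μ[G k | ⨆ j ∈ Finset.Icc 1 (k - 1), MeasurableSpace.comap (G j) inferInstance]
        =ᵐ[μ] fun ω => gradient f (w k ω))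
    (hvarint : ∀ k ∈ Finset.Icc 1 N,
      Integrable (fun ω => ‖G k ω - gradient f (w k ω)‖ ^ 2) μ)
    -- bounded conditional variance: E[‖G k - ∇f (w k)‖² | w k] ≤ σ²
    (hvar : ∀ k ∈ Finset.Icc 1 N,
      μ[(fun ω => ‖G k ω - gradient f (w k ω)‖ ^ 2) |
          ⨆ j ∈ Finset.Icc 1 (k - 1), MeasurableSpace.comap (G j) inferInstance]
        ≤ᵐ[μ] fun _ => σ ^ 2)
    (H : ℝ) (hH : H = ∑ k ∈ Finset.Icc 1 N, γ k)
    (R : Ω → ℕ) (hRmeas : Measurable R)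
    (hRrange : ∀ ω, R ω ∈ Finset.Icc 1 N)
    (hRdist : ∀ k ∈ Finset.Icc 1 N, μ {ω | R ω = k} = ENNReal.ofReal (γ k / H))
    (hRindep : IndepFun R (fun ω k => G k ω) μ) :
    ∫ ω, ‖gradient f (w (R ω) ω)‖ ^ 2 ∂μ
      ≤ 2 * (f w0 - fstar) / H + L * σ ^ 2 / H * ∑ k ∈ Finset.Icc 1 N, γ k ^ 2 :=
  rsg_convergence_general μ f L σ fstar hdiff hLip hbdd w0 N γ hγpos hγle G hGmeas w hw1 hupdate
    hmean hvarint hvar H hH R hRmeas hRrange hRdist hRindep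
end

section
/- Relation between the gradients of the narrowest and widest cells (equation (4)): Let F : (ℝ^d)^n → ℝ be differentiable, x ∈ ℝ^d, f(V^{(1)},…,V^{(n)}) = F(V^{(1)}x,…,V^{(n)}x), and f̂(W^{(1)},…,W^{(n)}) = F(ŷ^{(1)},…,ŷ^{(n)}) with ŷ^{(k)} = (∏_{j=1}^{k} W^{(j)}) x. Define the effective weights Ŵ^{(k)} = ∏_{j=1}^{k} W^{(j)}. Then for every i ∈ {1,…,n}, ∂f̂/∂W^{(i)} evaluated at (W^{(1)},…,W^{(n)}) equals Σ_{k=i}^{n} (∏_{j=i+1}^{k} W^{(j)})^T · [∂f/∂V^{(k)} evaluated at (Ŵ^{(1)},…,Ŵ^{(n)})] · (∏_{j=1}^{i−1} W^{(j)})^T, where empty products of matrices are the identity matrix. -/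
/-!
Statement 3: Relation between the gradients of the narrowest and widest cells (equation (4)).
Indices of the `n` intermediate nodes are `0, …, n-1` (the paper's `W^{(1)}, …, W^{(n)}`
correspond to `W 0, …, W (n-1)`).  The reversed product convention
`∏_{j=a}^{b} W^{(j)} = W^{(b)} ⋯ W^{(a)}` is implemented by `prodRev`; empty products are the
identity matrix.  The effective weights are `Ŵ⁽ᵏ⁾ = ∏_{j=1}^{k} W^{(j)} = prodRev W (Iic k)`.
-/

open scoped Matrix.Norms.L2Operator

open Matrix

/-- Reversed (descending-index) product of the matrices `W j`, `j ∈ s`;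
the empty product is the identity. -/
noncomputable def prodRev {n d : ℕ} (W : Fin n → Matrix (Fin d) (Fin d) ℝ)
    (s : Finset (Fin n)) : Matrix (Fin d) (Fin d) ℝ :=
  (((s.sort (· ≤ ·)).map W).reverse).prod

/-- `∂g/∂W⁽ⁱ⁾`: the `d × d` matrix whose `(a, b)` entry is the partial derivative of the scalar
function `g` of an `n`-tuple of `d × d` real matrices with respect to the `(a, b)` entry of the
`i`-th matrix argument. -/
noncomputable def matGrad {n d : ℕ}
    (g : (Fin n → Matrix (Fin d) (Fin d) ℝ) → ℝ)
    (W : Fin n → Matrix (Fin d) (Fin d) ℝ) (i : Fin n) : Matrix (Fin d) (Fin d) ℝ :=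
  Matrix.of fun a b => fderiv ℝ g W (Pi.single i (Matrix.single a b 1))

/-!
With `Φ W = (Ŵ⁽¹⁾, …, Ŵ⁽ⁿ⁾)` the effective weights, `f̂ = f ∘ Φ`. Moving only `W⁽ⁱ⁾` along a line
`W⁽ⁱ⁾ + t E` moves each `Ŵ⁽ᵏ⁾` with `k ≥ i` along the line `Ŵ⁽ᵏ⁾ + t Aₖ E B`, where
`Aₖ = ∏_{j=i+1}^{k} W⁽ʲ⁾` and `B = ∏_{j<i} W⁽ʲ⁾`, and leaves the others fixed; so `DΦ(W)` sends
`E` in slot `i` to `(Aₖ E B)_{k ≥ i}`. By the chain rule the `(a, b)` entry of `∂f̂/∂W⁽ⁱ⁾` is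
`∑_{k ≥ i} ⟨∂f/∂V⁽ᵏ⁾(Ŵ), Aₖ E_{ab} B⟩` (Frobenius pairing), and `⟨G, A E_{ab} B⟩ = (Aᵀ G Bᵀ)_{ab}`.
-/

theorem fderiv_apply_eq_of_forall_add_smul {E F : Type*} [NormedAddCommGroup E] [NormedSpace ℝ E]
    [NormedAddCommGroup F] [NormedSpace ℝ F] {h : E → F} {w v : E} {D : F}
    (hh : DifferentiableAt ℝ h w) (hline : ∀ t : ℝ, h (w + t • v) = h w + t • D) :
    fderiv ℝ h w v = D := by
  have hv : HasDerivAt (fun t : ℝ => w + t • v) v 0 := by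
    simpa using ((hasDerivAt_id (0 : ℝ)).smul_const v).const_add w
  have hcomp : HasDerivAt (fun t : ℝ => h (w + t • v)) (fderiv ℝ h w v) 0 :=
    hh.hasFDerivAt.comp_hasDerivAt_of_eq 0 hv (by simp)
  have hD : HasDerivAt (fun t : ℝ => h w + t • D) D 0 := by
    simpa using ((hasDerivAt_id (0 : ℝ)).smul_const D).const_add (h w)
  rw [funext hline] at hcomp
  exact hcomp.unique hD

theorem sum_mul_single_mul_apply_mul {l m n o R : Type*} [Fintype l] [Fintype m] [Fintype n]
    [Fintype o] [DecidableEq m] [DecidableEq n] [CommSemiring R]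
    (A : Matrix l m R) (B : Matrix n o R) (G : Matrix l o R) (a : m) (b : n) :
    ∑ c, ∑ e, (A * single a b (1 : R) * B) c e * G c e = (Aᵀ * G * Bᵀ) a b := by
  have hentry : ∀ c e, (A * single a b (1 : R) * B) c e = A c a * B b e := by
    intro c e
    simp [mul_apply, single, ite_and]
  simp only [hentry, mul_apply, transpose_apply, Finset.sum_mul]
  rw [Finset.sum_comm]
  exact Finset.sum_congr rfl fun e _ => Finset.sum_congr rfl fun c _ => by ring

theorem fderiv_apply_eq_sum_matGrad {n d : ℕ} (g : (Fin n → Matrix (Fin d) (Fin d) ℝ) → ℝ)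
    (W D : Fin n → Matrix (Fin d) (Fin d) ℝ) :
    fderiv ℝ g W D = ∑ k, ∑ a, ∑ b, D k a b * matGrad g W k a b := by
  have hD : D = ∑ k, ∑ a, ∑ b, D k a b • Pi.single k (single a b (1 : ℝ)) := by
    conv_lhs => rw [← Finset.univ_sum_single D]
    refine Finset.sum_congr rfl fun k _ => ?_
    conv_lhs => rw [matrix_eq_sum_single (D k)]
    simp only [← Pi.single_smul, smul_single, smul_eq_mul, mul_one]
    simp only [← LinearMap.single_apply ℝ, map_sum]
  conv_lhs => rw [hD]
  simp [map_sum, matGrad]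

theorem Finset.sort_union_of_forall_lt {α : Type*} [LinearOrder α] {s t : Finset α}
    (h : ∀ a ∈ s, ∀ b ∈ t, a < b) :
    (s ∪ t).sort (· ≤ ·) = s.sort (· ≤ ·) ++ t.sort (· ≤ ·) := by
  have hdisj : Disjoint s t :=
    Finset.disjoint_left.2 fun a has hat => (h a has a hat).false
  refine List.Perm.eq_of_pairwise' (Finset.pairwise_sort _ _) ?_ ?_
  · refine List.pairwise_append.2 ⟨Finset.pairwise_sort _ _, Finset.pairwise_sort _ _, ?_⟩
    exact fun a ha b hb => (h a ((Finset.mem_sort _).1 ha) b ((Finset.mem_sort _).1 hb)).le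
  · rw [← Multiset.coe_eq_coe, ← Multiset.coe_add, Finset.sort_eq, Finset.sort_eq,
      Finset.sort_eq, ← Finset.disjUnion_eq_union s t hdisj]
    rfl

section prodRev

variable {n d : ℕ} (W : Fin n → Matrix (Fin d) (Fin d) ℝ)

theorem prodRev_congr {V : Fin n → Matrix (Fin d) (Fin d) ℝ} {s : Finset (Fin n)}
    (h : ∀ j ∈ s, W j = V j) : prodRev W s = prodRev V s := by
  unfold prodRev
  rw [List.map_congr_left fun j hj => h j ((Finset.mem_sort _).1 hj)]

theorem prodRev_singleton (i : Fin n) : prodRev W {i} = W i := by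
  simp [prodRev]

theorem prodRev_union {s t : Finset (Fin n)} (h : ∀ a ∈ s, ∀ b ∈ t, a < b) :
    prodRev W (s ∪ t) = prodRev W t * prodRev W s := by
  rw [prodRev, Finset.sort_union_of_forall_lt h, List.map_append, List.reverse_append,
    List.prod_append, prodRev, prodRev]

theorem prodRev_Iic_of_le {i k : Fin n} (hik : i ≤ k) :
    prodRev W (Finset.Iic k) = prodRev W (Finset.Ioc i k) * W i * prodRev W (Finset.Iio i) := by
  have hIic : Finset.Iio i ∪ {i} ∪ Finset.Ioc i k = Finset.Iic k := by
    ext j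
    simp only [Finset.mem_union, Finset.mem_Iio, Finset.mem_singleton, Finset.mem_Ioc,
      Finset.mem_Iic]
    constructor
    · rintro ((hj | rfl) | ⟨_, hj⟩) <;> [exact hj.le.trans hik; exact hik; exact hj]
    · intro hj
      rcases lt_trichotomy j i with hji | rfl | hij
      exacts [Or.inl (Or.inl hji), Or.inl (Or.inr rfl), Or.inr ⟨hij, hj⟩]
  rw [← hIic, prodRev_union, prodRev_union, prodRev_singleton, mul_assoc]
  · simp +contextual
  · simp only [Finset.mem_union, Finset.mem_Iio, Finset.mem_singleton, Finset.mem_Ioc]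
    rintro a (ha | rfl) b ⟨hb, -⟩
    exacts [ha.trans hb, hb]

theorem prodRev_Iic_add_smul_single (i : Fin n) (E : Matrix (Fin d) (Fin d) ℝ) (t : ℝ)
    (k : Fin n) :
    prodRev (W + t • (Pi.single i E : Fin n → _)) (Finset.Iic k)
      = prodRev W (Finset.Iic k)
        + t • if i ≤ k then prodRev W (Finset.Ioc i k) * E * prodRev W (Finset.Iio i) else 0 := by
  set V : Fin n → Matrix (Fin d) (Fin d) ℝ := W + t • (Pi.single i E : Fin n → _) with hV
  have hfix : ∀ s : Finset (Fin n), i ∉ s → prodRev V s = prodRev W s :=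
    fun s hi => (prodRev_congr _ fun j hj => by
      simp [hV, Pi.single_eq_of_ne (ne_of_mem_of_not_mem hj hi)]).symm
  split_ifs with hik
  · rw [prodRev_Iic_of_le _ hik, prodRev_Iic_of_le W hik, hfix _ (by simp), hfix _ (by simp)]
    simp [hV, mul_add, add_mul, mul_assoc]
  · rw [smul_zero, add_zero, hfix _ (by simpa using hik)]

theorem differentiable_prodRev (s : Finset (Fin n)) :
    Differentiable ℝ fun V : Fin n → Matrix (Fin d) (Fin d) ℝ => prodRev V s := by
  simp only [prodRev, ← List.map_reverse]
  exact fun V => hasStrictFDerivAt_list_prod'.differentiableAt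

theorem fderiv_prodRev_Iic_apply_single (i : Fin n) (E : Matrix (Fin d) (Fin d) ℝ) :
    fderiv ℝ (fun V k => prodRev V (Finset.Iic k)) W (Pi.single i E)
      = fun k => if i ≤ k then prodRev W (Finset.Ioc i k) * E * prodRev W (Finset.Iio i) else 0 :=
  fderiv_apply_eq_of_forall_add_smul
    (differentiable_pi.2 fun k => differentiable_prodRev (Finset.Iic k)).differentiableAt
    fun t => funext (prodRev_Iic_add_smul_single W i E t)

end prodRev

theorem narrowest_vs_widest_gradient_general {n d : ℕ}
    (F : (Fin n → (Fin d → ℝ)) → ℝ) (hF : Differentiable ℝ F)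
    (x : Fin d → ℝ) (W : Fin n → Matrix (Fin d) (Fin d) ℝ) (i : Fin n) :
    matGrad (fun V => F fun k => (prodRev V (Finset.Iic k)).mulVec x) W i
      = ∑ k ∈ Finset.Ici i,
          (prodRev W (Finset.Ioc i k))ᵀ *
            matGrad (fun V => F fun k' => (V k').mulVec x)
              (fun k' => prodRev W (Finset.Iic k')) k *
            (prodRev W (Finset.Iio i))ᵀ := by
  set f : (Fin n → Matrix (Fin d) (Fin d) ℝ) → ℝ := fun V => F fun k => (V k).mulVec x
  set Φ : (Fin n → Matrix (Fin d) (Fin d) ℝ) → Fin n → Matrix (Fin d) (Fin d) ℝ :=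
    fun V k => prodRev V (Finset.Iic k)
  have hmulVec : Differentiable ℝ fun M : Matrix (Fin d) (Fin d) ℝ => M *ᵥ x :=
    (LinearMap.toContinuousLinearMap ((mulVecBilin ℝ ℝ).flip x)).differentiable
  have hf : Differentiable ℝ f := hF.comp (by fun_prop)
  have hΦ : Differentiable ℝ Φ := differentiable_pi.2 fun k => differentiable_prodRev _
  ext a b
  calc matGrad (f ∘ Φ) W i a b
      = fderiv ℝ f (Φ W) (fderiv ℝ Φ W (Pi.single i (single a b 1))) := by
        rw [matGrad, of_apply, fderiv_comp W (hf _) (hΦ _), ContinuousLinearMap.comp_apply]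
    _ = ∑ k, ∑ c, ∑ e, (if i ≤ k then prodRev W (Finset.Ioc i k) * single a b 1 *
          prodRev W (Finset.Iio i) else 0 : Matrix (Fin d) (Fin d) ℝ) c e *
            matGrad f (Φ W) k c e := by
        rw [fderiv_prodRev_Iic_apply_single, fderiv_apply_eq_sum_matGrad]
    _ = ∑ k ∈ Finset.Ici i, ((prodRev W (Finset.Ioc i k))ᵀ * matGrad f (Φ W) k *
          (prodRev W (Finset.Iio i))ᵀ) a b := by
        simp only [← Finset.filter_le_eq_Ici, Finset.sum_filter, ← sum_mul_single_mul_apply_mul]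
        refine Finset.sum_congr rfl fun k _ => ?_
        split_ifs <;> simp
    _ = _ := (Matrix.sum_apply _ _ _ _).symm

theorem narrowest_vs_widest_gradient {n d : ℕ} (hn : 1 ≤ n) (hd : 1 ≤ d)
    (F : (Fin n → (Fin d → ℝ)) → ℝ) (hF : Differentiable ℝ F)
    (x : Fin d → ℝ) (W : Fin n → Matrix (Fin d) (Fin d) ℝ) (i : Fin n) :
    matGrad (fun V => F fun k => (prodRev V (Finset.Iic k)).mulVec x) W i
      = ∑ k ∈ Finset.Ici i,
          (prodRev W (Finset.Ioc i k))ᵀ *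
            matGrad (fun V => F fun k' => (V k').mulVec x)
              (fun k' => prodRev W (Finset.Iic k')) k *
            (prodRev W (Finset.Iio i))ᵀ :=
  narrowest_vs_widest_gradient_general F hF x W i
end
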